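/- arXiv:1505.00199 — 9 statements merged into one kernel-verified Lean document; each statement's English description precedes it below -/
import Mathlib

section
/- Let D be a nonempty open convex subset of ℝ^d and let F : D → ℝ be a non-constant differentiable function. Then F is pseudo-linear on D if and only if the following two conditions hold: (1) the gradient ∇F(e) is nonzero for every e ∈ D, and (2) there exist functions a : ℝ → ℝ^d and b : ℝ → ℝ such that for every t in the image of F and every e ∈ D one has F(e) ≥ t ⇔ ⟨a(t), e⟩ + b(t) ≤ 0, and F(e) ≤ t ⇔ ⟨a(t), e⟩ + b(t) ≥ 0. -/
open RealInnerProductSpace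

/-- A differentiable function `F` is pseudo-convex on `D` if for all `e, e' ∈ D`,
`F e > F e'` implies `⟪∇F e, e' - e⟫ < 0`. -/
def PseudoConvexOn {E : Type*} [NormedAddCommGroup E] [InnerProductSpace ℝ E] [CompleteSpace E]
    (D : Set E) (F : E → ℝ) : Prop :=
  ∀ e ∈ D, ∀ e' ∈ D, F e > F e' → ⟪gradient F e, e' - e⟫ < 0

/-- `F` is pseudo-linear on `D` if both `F` and `-F` are pseudo-convex on `D`. -/
def PseudoLinearOn {E : Type*} [NormedAddCommGroup E] [InnerProductSpace ℝ E] [CompleteSpace E]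
    (D : Set E) (F : E → ℝ) : Prop :=
  PseudoConvexOn D F ∧ PseudoConvexOn D (fun e => -F e)

section Aux

open Filter Set Topology

variable {E : Type*} [NormedAddCommGroup E] [InnerProductSpace ℝ E] [CompleteSpace E]

lemma aux_inner_gradient (f : E → ℝ) (z v : E) :
    ⟪gradient f z, v⟫ = fderiv ℝ f z v :=
  InnerProductSpace.toDual_symm_apply

lemma aux_gradient_neg (f : E → ℝ) (x : E) :
    gradient (fun y => -f y) x = -gradient f x := by
  unfold gradient
  rw [fderiv_fun_neg, map_neg]

lemma aux_line_deriv (f : E → ℝ) (e v : E) (s : ℝ)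
    (hf : DifferentiableAt ℝ f (e + s • v)) :
    HasDerivAt (fun r : ℝ => f (e + r • v)) ⟪gradient f (e + s • v), v⟫ s := by
  have h1 : HasDerivAt (fun r : ℝ => e + r • v) v s := by
    simpa using ((hasDerivAt_id s).smul_const v).const_add e
  have h2 := hf.hasFDerivAt.comp_hasDerivAt s h1
  rw [aux_inner_gradient]
  exact h2

lemma aux_not_pos {D : Set E} {F : E → ℝ} (hopen : IsOpen D) (hconv : Convex ℝ D)
    (hdiff : DifferentiableOn ℝ F D) (hpc : PseudoConvexOn D F)
    {x y : E} (hx : x ∈ D) (hy : y ∈ D) (hxy : F x = F y) :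
    ¬ 0 < ⟪gradient F y, x - y⟫ := by
  intro hc
  set v := x - y with hv
  have hmem : ∀ s ∈ Icc (0:ℝ) 1, y + s • v ∈ D := by
    intro s hs
    have h := hconv hy hx (by linarith [hs.2] : (0:ℝ) ≤ 1 - s) hs.1 (by ring)
    convert h using 1
    module
  have hdz : ∀ s ∈ Icc (0:ℝ) 1,
      HasDerivAt (fun r : ℝ => F (y + r • v)) ⟪gradient F (y + s • v), v⟫ s :=
    fun s hs => aux_line_deriv F y v s
      (hdiff.differentiableAt (hopen.mem_nhds (hmem s hs)))
  set φ : ℝ → ℝ := fun r => F (y + r • v) with hφ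
  have hy0 : y + (0:ℝ) • v = y := by simp
  have hy1 : y + (1:ℝ) • v = x := by rw [hv]; module
  have hφ0 : φ 0 = F y := by rw [hφ]; simp
  have hφ1 : φ 1 = F x := by show F (y + (1:ℝ) • v) = F x; rw [hy1]
  have hd0 : HasDerivAt φ ⟪gradient F y, v⟫ 0 := by
    have := hdz 0 ⟨le_refl 0, zero_le_one⟩
    rwa [hy0] at this
  have hslope := hasDerivAt_iff_tendsto_slope.1 hd0
  have hev : ∀ᶠ s in 𝓝[≠] (0:ℝ), 0 < slope φ 0 s :=
    hslope.eventually (eventually_gt_nhds hc)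
  have hev2 : ∀ᶠ s in 𝓝[>] (0:ℝ), 0 < slope φ 0 s :=
    hev.filter_mono (nhdsWithin_mono 0 (fun a ha => ne_of_gt ha))
  have hmem01 : Ioo (0:ℝ) 1 ∈ 𝓝[>] (0:ℝ) :=
    Ioo_mem_nhdsGT_of_mem ⟨le_refl 0, zero_lt_one⟩
  obtain ⟨s₀, hsl₀, hs₀⟩ := (hev2.and (eventually_of_mem hmem01 (fun _ h => h))).exists
  have hφs₀ : φ 0 < φ s₀ := by
    have h' : 0 < (φ s₀ - φ 0) / s₀ := by
      have := hsl₀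
      rwa [slope_def_field, sub_zero] at this
    have := mul_pos h' hs₀.1
    rwa [div_mul_cancel₀ _ (ne_of_gt hs₀.1), sub_pos] at this
  have hcont : ContinuousOn φ (Icc 0 1) :=
    fun s hs => ((hdz s hs).continuousAt).continuousWithinAt
  obtain ⟨s₁, hs₁mem, hs₁max⟩ :=
    isCompact_Icc.exists_isMaxOn (nonempty_Icc.2 zero_le_one) hcont
  have hlt0 : φ 0 < φ s₁ := lt_of_lt_of_le hφs₀ (hs₁max (Ioo_subset_Icc_self hs₀))
  have hs₁Ioo : s₁ ∈ Ioo (0:ℝ) 1 := by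
    refine ⟨lt_of_le_of_ne hs₁mem.1 (fun h => ?_), lt_of_le_of_ne hs₁mem.2 (fun h => ?_)⟩
    · rw [← h] at hlt0; exact lt_irrefl _ hlt0
    · rw [h] at hlt0
      rw [hφ0, hφ1] at hlt0
      linarith [hxy]
  have hloc : IsLocalMax φ s₁ := hs₁max.isLocalMax (Icc_mem_nhds hs₁Ioo.1 hs₁Ioo.2)
  have hder := hdz s₁ (Ioo_subset_Icc_self hs₁Ioo)
  have hzero : ⟪gradient F (y + s₁ • v), v⟫ = 0 := hloc.hasDerivAt_eq_zero hder
  set z := y + s₁ • v with hz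
  have hzD : z ∈ D := hmem s₁ (Ioo_subset_Icc_self hs₁Ioo)
  have hFz : F z > F x := by
    have h1 : φ s₁ = F z := rfl
    rw [hφ0, ← hxy] at hlt0
    rw [h1] at hlt0
    exact hlt0
  have hpcz := hpc z hzD x hx hFz
  have hxz : x - z = (1 - s₁) • v := by rw [hz, hv]; module
  rw [hxz, real_inner_smul_right, hzero, mul_zero] at hpcz
  exact lt_irrefl 0 hpcz

lemma aux_inner_eq_zero {D : Set E} {F : E → ℝ} (hopen : IsOpen D) (hconv : Convex ℝ D)
    (hdiff : DifferentiableOn ℝ F D) (hPL : PseudoLinearOn D F)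
    {x y : E} (hx : x ∈ D) (hy : y ∈ D) (hxy : F x = F y) :
    ⟪gradient F y, x - y⟫ = 0 := by
  have h1 := aux_not_pos hopen hconv hdiff hPL.1 hx hy hxy
  have h2 := aux_not_pos (F := fun e => -F e) hopen hconv hdiff.neg hPL.2 hx hy
    (show -F x = -F y by rw [hxy])
  rw [aux_gradient_neg, inner_neg_left] at h2
  push_neg at h1 h2
  linarith

lemma aux_key {D : Set E} {F : E → ℝ} (hopen : IsOpen D)
    (hdiff : DifferentiableOn ℝ F D)
    {e A : E} {bb : ℝ} (he : e ∈ D) (hA : A ≠ 0)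
    (hge : ∀ x ∈ D, (F x ≥ F e ↔ ⟪A, x⟫ + bb ≤ 0))
    (hle : ∀ x ∈ D, (F x ≤ F e ↔ ⟪A, x⟫ + bb ≥ 0))
    (hgrad : gradient F e ≠ 0) :
    (∀ v : E, ⟪gradient F e, v⟫ = ⟪A, v⟫ / ‖A‖ ^ 2 * ⟪gradient F e, A⟫) ∧
      ⟪gradient F e, A⟫ < 0 := by
  have hL0 : ⟪A, e⟫ + bb = 0 := le_antisymm ((hge e he).1 le_rfl) ((hle e he).1 le_rfl)
  have hsign1 : ∀ x ∈ D, ⟪A, x⟫ + bb < 0 → F e < F x := by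
    intro x hx h
    by_contra hcon
    push_neg at hcon
    have := (hle x hx).1 hcon
    linarith
  have hsign2 : ∀ x ∈ D, 0 < ⟪A, x⟫ + bb → F x < F e := by
    intro x hx h
    by_contra hcon
    push_neg at hcon
    have := (hge x hx).1 hcon
    linarith
  have hsign0 : ∀ x ∈ D, ⟪A, x⟫ + bb = 0 → F x = F e := by
    intro x hx h
    have h1 := (hge x hx).2 (le_of_eq h)
    have h2 := (hle x hx).2 (ge_of_eq h)
    linarith
  obtain ⟨ε, hε, hball⟩ := Metric.isOpen_iff.1 hopen e he
  have hgen : ∀ v : E, ∀ s : ℝ, |s| * ‖v‖ < ε → e + s • v ∈ D := by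
    intro v s h
    apply hball
    rw [Metric.mem_ball, dist_eq_norm]
    have h2 : e + s • v - e = s • v := by module
    rw [h2, norm_smul]
    simpa [Real.norm_eq_abs] using h
  have hsmall : ∀ v : E, ∀ s : ℝ, |s| < ε / (‖v‖ + 1) → |s| * ‖v‖ < ε := by
    intro v s h1
    have hpos : (0:ℝ) < ‖v‖ + 1 := by positivity
    refine lt_of_le_of_lt ?_ ((lt_div_iff₀ hpos).1 h1)
    nlinarith [abs_nonneg s, norm_nonneg v]
  have hlin : ∀ v : E, ∀ s : ℝ, ⟪A, e + s • v⟫ + bb = s * ⟪A, v⟫ := by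
    intro v s
    rw [inner_add_right, real_inner_smul_right]
    linarith [hL0]
  have hdiffe : DifferentiableAt ℝ F e := hdiff.differentiableAt (hopen.mem_nhds he)
  have hderiv : ∀ v : E, HasDerivAt (fun r : ℝ => F (e + r • v)) ⟪gradient F e, v⟫ 0 := by
    intro v
    have h0 : e + (0:ℝ) • v = e := by simp
    have := aux_line_deriv F e v 0 (by rw [h0]; exact hdiffe)
    rwa [h0] at this
  have horth : ∀ v : E, ⟪A, v⟫ = 0 → ⟪gradient F e, v⟫ = 0 := by
    intro v hv
    have hδ : 0 < ε / (‖v‖ + 1) := by positivity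
    have hev : (fun r : ℝ => F (e + r • v)) =ᶠ[𝓝 (0:ℝ)] fun _ => F e := by
      filter_upwards [Metric.ball_mem_nhds (0:ℝ) hδ] with s hs
      have h1 : |s| < ε / (‖v‖ + 1) := by simpa [Real.dist_eq] using hs
      exact hsign0 _ (hgen v s (hsmall v s h1)) (by rw [hlin, hv, mul_zero])
    exact (hderiv v).unique ((hasDerivAt_const (0:ℝ) (F e)).congr_of_eventuallyEq hev)
  have hAnorm : (0:ℝ) < ‖A‖ ^ 2 := pow_pos (norm_pos_iff.2 hA) 2
  have hneg : ⟪gradient F e, A⟫ ≤ 0 := by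
    have hδ : 0 < ε / (‖A‖ + 1) := by positivity
    have hev : ∀ᶠ s in nhdsWithin (0:ℝ) {(0:ℝ)}ᶜ,
        slope (fun r : ℝ => F (e + r • A)) 0 s ≤ 0 := by
      filter_upwards [nhdsWithin_le_nhds (Metric.ball_mem_nhds (0:ℝ) hδ),
        self_mem_nhdsWithin] with s hs hs0
      have h1 : |s| < ε / (‖A‖ + 1) := by simpa [Real.dist_eq] using hs
      have hmem : e + s • A ∈ D := hgen A s (hsmall A s h1)
      have hLs : ⟪A, e + s • A⟫ + bb = s * ‖A‖ ^ 2 := by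
        rw [hlin, real_inner_self_eq_norm_sq]
      have h0 : e + (0:ℝ) • A = e := by simp
      rw [slope_def_field, sub_zero]
      simp only [h0]
      rcases lt_or_gt_of_ne (show s ≠ 0 from hs0) with hsneg | hspos
      · have hF := hsign1 _ hmem (by rw [hLs]; nlinarith)
        exact div_nonpos_of_nonneg_of_nonpos (by linarith) (le_of_lt hsneg)
      · have hF := hsign2 _ hmem (by rw [hLs]; nlinarith)
        exact div_nonpos_of_nonpos_of_nonneg (by linarith) (le_of_lt hspos)
    exact le_of_tendsto (hasDerivAt_iff_tendsto_slope.1 (hderiv A)) hev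
  have hformula : ∀ v : E, ⟪gradient F e, v⟫ = ⟪A, v⟫ / ‖A‖ ^ 2 * ⟪gradient F e, A⟫ := by
    intro v
    have hw : ⟪A, v - (⟪A, v⟫ / ‖A‖ ^ 2) • A⟫ = 0 := by
      rw [inner_sub_right, real_inner_smul_right, real_inner_self_eq_norm_sq]
      field_simp
      ring
    have h2 := horth _ hw
    rw [inner_sub_right, real_inner_smul_right] at h2
    linarith
  refine ⟨hformula, lt_of_le_of_ne hneg ?_⟩
  intro h
  apply hgrad
  have h3 : ⟪gradient F e, gradient F e⟫ = (0:ℝ) := by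
    rw [hformula (gradient F e), h, mul_zero]
  exact inner_self_eq_zero.1 h3

end Aux

/-- Cambini–Martein characterization of pseudo-linear functions: a non-constant
differentiable function on a nonempty open convex set is pseudo-linear iff its gradient
never vanishes and its level sets are hyperplanes, in the sense that there are
`a : ℝ → ℝ^d` and `b : ℝ → ℝ` such that for every `t` in the image of `F`,
`F e ≥ t ↔ ⟪a t, e⟫ + b t ≤ 0` and `F e ≤ t ↔ ⟪a t, e⟫ + b t ≥ 0`. -/
theorem pseudoLinear_iff_level_sets_hyperplanes {d : ℕ}
    (D : Set (EuclideanSpace ℝ (Fin d))) (F : EuclideanSpace ℝ (Fin d) → ℝ)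
    (hne : D.Nonempty) (hopen : IsOpen D) (hconv : Convex ℝ D)
    (hdiff : DifferentiableOn ℝ F D)
    (hnonconst : ∃ e ∈ D, ∃ e' ∈ D, F e ≠ F e') :
    PseudoLinearOn D F ↔
      ((∀ e ∈ D, gradient F e ≠ 0) ∧
        ∃ (a : ℝ → EuclideanSpace ℝ (Fin d)) (b : ℝ → ℝ),
          ∀ t ∈ F '' D, ∀ e ∈ D,
            (F e ≥ t ↔ ⟪a t, e⟫ + b t ≤ 0) ∧ (F e ≤ t ↔ ⟪a t, e⟫ + b t ≥ 0)) := by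
  classical
  obtain ⟨p, hp, q, hq, hpq⟩ := hnonconst
  have hwitness : ∀ e ∈ D, ∃ r ∈ D, F r ≠ F e := by
    intro e he
    by_cases h : F p = F e
    · exact ⟨q, hq, fun hq' => hpq (by rw [h, hq'])⟩
    · exact ⟨p, hp, h⟩
  constructor
  · intro hPL
    constructor
    · -- gradient never vanishes
      intro e he h0
      obtain ⟨r, hr, hre⟩ := hwitness e he
      rcases lt_or_gt_of_ne hre with h | h
      · have := hPL.1 e he r hr h
        rw [h0, inner_zero_left] at this
        exact lt_irrefl 0 this
      · have := hPL.2 e he r hr (by simpa using h)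
        rw [aux_gradient_neg, h0, neg_zero, inner_zero_left] at this
        exact lt_irrefl 0 this
    · -- level sets are hyperplanes
      have tri : ∀ x ∈ D, ∀ z ∈ D,
          (F z < F x → ⟪gradient F x, z - x⟫ < 0) ∧
          (F x < F z → 0 < ⟪gradient F x, z - x⟫) ∧
          (F z = F x → ⟪gradient F x, z - x⟫ = 0) := by
        intro x hx z hz
        refine ⟨fun h => hPL.1 x hx z hz h, fun h => ?_,
          fun h => aux_inner_eq_zero hopen hconv hdiff hPL hz hx h⟩
        have := hPL.2 x hx z hz (by simpa using h)
        rw [aux_gradient_neg, inner_neg_left] at this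
        linarith
      refine ⟨fun t => if h : ∃ y, y ∈ D ∧ F y = t then -(gradient F h.choose) else 0,
        fun t => if h : ∃ y, y ∈ D ∧ F y = t then ⟪gradient F h.choose, h.choose⟫ else 0, ?_⟩
      intro t ht x hx
      have ht' : ∃ y, y ∈ D ∧ F y = t := by
        obtain ⟨y, hy, hyt⟩ := ht
        exact ⟨y, hy, hyt⟩
      simp only [dif_pos ht']
      obtain ⟨hyD, hyF⟩ := ht'.choose_spec
      set y := ht'.choose with hy_def
      have hLval : ⟪-(gradient F y), x⟫ + ⟪gradient F y, y⟫ = -⟪gradient F y, x - y⟫ := by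
        rw [inner_neg_left, inner_sub_right]
        ring
      rw [hLval]
      obtain ⟨t1, t2, t3⟩ := tri y hyD x hx
      constructor
      · constructor
        · intro h
          rcases eq_or_lt_of_le h with heq | hlt
          · have := t3 (by rw [hyF, heq])
            linarith
          · have := t2 (by rw [hyF]; exact hlt)
            linarith
        · intro h
          by_contra hcon
          push_neg at hcon
          have := t1 (by rw [hyF]; exact hcon)
          linarith
      · constructor
        · intro h
          rcases eq_or_lt_of_le h with heq | hlt
          · have := t3 (by rw [hyF, ← heq])
            linarith
          · have := t1 (by rw [hyF]; exact hlt)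
            linarith
        · intro h
          by_contra hcon
          push_neg at hcon
          have := t2 (by rw [hyF]; exact hcon)
          linarith
  · rintro ⟨hgrad, a, b, hab⟩
    have habe : ∀ e ∈ D, ∀ x ∈ D,
        (F x ≥ F e ↔ ⟪a (F e), x⟫ + b (F e) ≤ 0) ∧
        (F x ≤ F e ↔ ⟪a (F e), x⟫ + b (F e) ≥ 0) :=
      fun e he x hx => hab (F e) ⟨e, he, rfl⟩ x hx
    have hA : ∀ e ∈ D, a (F e) ≠ 0 := by
      intro e he h0
      have hLe : ⟪a (F e), e⟫ + b (F e) = 0 :=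
        le_antisymm ((habe e he e he).1.1 le_rfl) ((habe e he e he).2.1 le_rfl)
      obtain ⟨r, hr, hre⟩ := hwitness e he
      have hLr : ⟪a (F e), r⟫ + b (F e) = 0 := by
        rw [h0, inner_zero_left] at hLe ⊢
        exact hLe
      have hge := (habe e he r hr).1.2 (le_of_eq hLr)
      have hle := (habe e he r hr).2.2 (ge_of_eq hLr)
      exact hre (le_antisymm hle hge)
    have key : ∀ e ∈ D,
        (∀ v, ⟪gradient F e, v⟫ = ⟪a (F e), v⟫ / ‖a (F e)‖ ^ 2 * ⟪gradient F e, a (F e)⟫) ∧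
          ⟪gradient F e, a (F e)⟫ < 0 :=
      fun e he => aux_key hopen hdiff he (hA e he)
        (fun x hx => (habe e he x hx).1) (fun x hx => (habe e he x hx).2) (hgrad e he)
    have hLe0 : ∀ e ∈ D, ⟪a (F e), e⟫ + b (F e) = 0 := fun e he =>
      le_antisymm ((habe e he e he).1.1 le_rfl) ((habe e he e he).2.1 le_rfl)
    constructor
    · intro e he e' he' hgt
      obtain ⟨hform, hneg⟩ := key e he
      have hL' : 0 < ⟪a (F e), e'⟫ + b (F e) := by
        by_contra h
        push_neg at h
        have := (habe e he e' he').1.2 h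
        linarith
      have hin : 0 < ⟪a (F e), e' - e⟫ := by
        rw [inner_sub_right]
        have := hLe0 e he
        linarith
      rw [hform (e' - e)]
      exact mul_neg_of_pos_of_neg
        (div_pos hin (pow_pos (norm_pos_iff.2 (hA e he)) 2)) hneg
    · intro e he e' he' hgt
      have hF : F e < F e' := by simpa using hgt
      obtain ⟨hform, hneg⟩ := key e he
      have hL' : ⟪a (F e), e'⟫ + b (F e) < 0 := by
        by_contra h
        push_neg at h
        have := (habe e he e' he').2.2 h
        linarith
      have hin : ⟪a (F e), e' - e⟫ < 0 := by
        rw [inner_sub_right]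
        have := hLe0 e he
        linarith
      rw [aux_gradient_neg, inner_neg_left, neg_lt_zero, hform (e' - e)]
      exact mul_pos_of_neg_of_neg
        (div_neg_of_neg_of_pos hin (pow_pos (norm_pos_iff.2 (hA e he)) 2)) hneg
end

section
/- Let D ⊆ ℝ^d, let F : D → ℝ, and suppose there exist functions a : ℝ → ℝ^d and b : ℝ → ℝ such that for every t in the image of F and every e ∈ D one has F(e) ≥ t ⇔ ⟨a(t), e⟩ + b(t) ≤ 0 and F(e) ≤ t ⇔ ⟨a(t), e⟩ + b(t) ≥ 0. Let E ⊆ D be a nonempty compact set, and let F⋆ = max over e ∈ E of F(e). Then for every e⋆ ∈ E: e⋆ minimizes the linear function e ↦ ⟨a(F⋆), e⟩ over E if and only if F(e⋆) = F⋆. -/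
open RealInnerProductSpace

/-! On `E` every value of `F` is at most `F⋆`, so the level-set description at `t = F⋆` puts `E`
in the half-space `⟪a F⋆, e⟫ ≥ -b F⋆`, while a maximizer of `F` lies on its boundary hyperplane.
Hence the minimum of `⟪a F⋆, ·⟫` over `E` is `-b F⋆`, and it is attained exactly at the points of
`E` on that hyperplane, which are exactly the points where `F ≥ F⋆`, i.e. the maximizers of `F`. -/

theorem isMinOn_iff_le_of_forall_le_of_exists_le {α β : Type*} [Preorder β] {g : α → β}
    {s : Set α} {c : β} (hlower : ∀ y ∈ s, c ≤ g y) (hattained : ∃ y ∈ s, g y ≤ c) {x : α} :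
    IsMinOn g s x ↔ g x ≤ c := by
  obtain ⟨y, hys, hyc⟩ := hattained
  exact ⟨fun hmin => (hmin hys).trans hyc, fun hxc y hy => hxc.trans (hlower y hy)⟩

theorem IsGreatest.eq_iff_le_apply {α β : Type*} [PartialOrder β] {f : α → β} {s : Set α} {t : β}
    (ht : IsGreatest (f '' s) t) {x : α} (hx : x ∈ s) : f x = t ↔ t ≤ f x :=
  ⟨ge_of_eq, (ht.2 (Set.mem_image_of_mem f hx)).antisymm⟩

theorem maximizer_iff_costSensitive_minimizer_general {d : ℕ}
    (D : Set (EuclideanSpace ℝ (Fin d))) (F : EuclideanSpace ℝ (Fin d) → ℝ)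
    (a : ℝ → EuclideanSpace ℝ (Fin d)) (b : ℝ → ℝ)
    (hab : ∀ t ∈ F '' D, ∀ e ∈ D,
      (F e ≥ t ↔ ⟪a t, e⟫ + b t ≤ 0) ∧ (F e ≤ t ↔ ⟪a t, e⟫ + b t ≥ 0))
    (E : Set (EuclideanSpace ℝ (Fin d))) (hED : E ⊆ D)
    (Fstar : ℝ) (hFstar : IsGreatest (F '' E) Fstar) :
    ∀ estar ∈ E,
      ((∀ e ∈ E, ⟪a Fstar, estar⟫ ≤ ⟪a Fstar, e⟫) ↔ F estar = Fstar) := by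
  intro estar hestar
  have level := hab Fstar (Set.image_mono hED hFstar.1)
  have on_hyperplane_iff : ∀ e ∈ E, Fstar ≤ F e ↔ ⟪a Fstar, e⟫ ≤ -b Fstar := fun e he =>
    (level e (hED he)).1.trans ⟨fun h => by linarith, fun h => by linarith⟩
  have in_halfspace : ∀ e ∈ E, -b Fstar ≤ ⟪a Fstar, e⟫ := fun e he => by
    have := (level e (hED he)).2.mp (hFstar.2 (Set.mem_image_of_mem F he))
    linarith
  have on_hyperplane : ∃ e ∈ E, ⟪a Fstar, e⟫ ≤ -b Fstar := by
    obtain ⟨e, he, hFe⟩ := hFstar.1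
    exact ⟨e, he, (on_hyperplane_iff e he).1 hFe.ge⟩
  rw [hFstar.eq_iff_le_apply hestar, on_hyperplane_iff estar hestar,
    ← isMinOn_iff_le_of_forall_le_of_exists_le in_halfspace on_hyperplane]
  exact isMinOn_iff.symm

/-- If the level sets of `F` on `D` are hyperplanes given by `a : ℝ → ℝ^d` and
`b : ℝ → ℝ` (as in the characterization of pseudo-linear functions), `E ⊆ D` is a
nonempty compact set and `F⋆` is the maximum of `F` over `E`, then a point `e⋆ ∈ E`
minimizes `e ↦ ⟪a F⋆, e⟫` over `E` if and only if `F e⋆ = F⋆`. -/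
theorem maximizer_iff_costSensitive_minimizer {d : ℕ}
    (D : Set (EuclideanSpace ℝ (Fin d))) (F : EuclideanSpace ℝ (Fin d) → ℝ)
    (a : ℝ → EuclideanSpace ℝ (Fin d)) (b : ℝ → ℝ)
    (hab : ∀ t ∈ F '' D, ∀ e ∈ D,
      (F e ≥ t ↔ ⟪a t, e⟫ + b t ≤ 0) ∧ (F e ≤ t ↔ ⟪a t, e⟫ + b t ≥ 0))
    (E : Set (EuclideanSpace ℝ (Fin d))) (hED : E ⊆ D)
    (hEne : E.Nonempty) (hEcomp : IsCompact E)
    (Fstar : ℝ) (hFstar : IsGreatest (F '' E) Fstar) :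
    ∀ estar ∈ E,
      ((∀ e ∈ E, ⟪a Fstar, estar⟫ ≤ ⟪a Fstar, e⟫) ↔ F estar = Fstar) :=
  maximizer_iff_costSensitive_minimizer_general D F a b hab E hED Fstar hFstar
end

section
/- Let D ⊆ ℝ^d, F : D → ℝ, a : ℝ → ℝ^d, and let E ⊆ D be a nonempty compact set with M = max over e' ∈ E of ‖e'‖. Let ε₀ ≥ 0, ε₁ ≥ 0, and assume there exists Φ > 0 such that for all e, e' ∈ E with F(e') > F(e) one has F(e') − F(e) ≤ Φ·⟨a(F(e')), e − e'⟩. Let e⋆ ∈ E maximize F over E and set a⋆ = a(F(e⋆)). Suppose â ∈ ℝ^d and e ∈ E satisfy: (i) ‖â − a⋆‖ ≤ ε₀, and (ii) ⟨â, e⟩ ≤ min over e' ∈ E of ⟨â, e'⟩ + ε₁. Then F(e) ≥ F(e⋆) − Φ·(2ε₀M + ε₁). -/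
open RealInnerProductSpace

/-! If `F e < F e⋆`, the key hypothesis bounds the gap by `Φ ⟪a⋆, e - e⋆⟫`. Replacing `a⋆` by
`â` costs at most `‖â - a⋆‖ ‖e - e⋆‖ ≤ 2 ε₀ M`, and `⟪â, e - e⋆⟫ ≤ ε₁` because `e` is an
`ε₁`-approximate minimizer of `⟪â, ·⟫`. -/

section InnerProductSpace

variable {V : Type*} [NormedAddCommGroup V] [InnerProductSpace ℝ V]

theorem real_inner_le_real_inner_add_norm_sub_mul_norm (a b v : V) :
    ⟪a, v⟫ ≤ ⟪b, v⟫ + ‖b - a‖ * ‖v‖ := by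
  have hsplit : ⟪a, v⟫ = ⟪b, v⟫ - ⟪b - a, v⟫ := by rw [inner_sub_left]; ring
  rw [hsplit]
  linarith [neg_le_of_abs_le (abs_real_inner_le_norm (b - a) v)]

theorem real_inner_sub_le_of_approx_minimizer {a ahat x y : V} {ε₀ ε₁ M : ℝ}
    (ha : ‖ahat - a‖ ≤ ε₀) (hx : ‖x‖ ≤ M) (hy : ‖y‖ ≤ M)
    (hmin : ⟪ahat, x⟫ ≤ ⟪ahat, y⟫ + ε₁) :
    ⟪a, x - y⟫ ≤ 2 * ε₀ * M + ε₁ := by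
  have hdiam : ‖x - y‖ ≤ 2 * M := by linarith [norm_sub_le x y]
  have hε₀ : 0 ≤ ε₀ := (norm_nonneg _).trans ha
  calc ⟪a, x - y⟫ ≤ ⟪ahat, x - y⟫ + ‖ahat - a‖ * ‖x - y‖ :=
        real_inner_le_real_inner_add_norm_sub_mul_norm a ahat (x - y)
    _ ≤ ε₁ + ε₀ * (2 * M) := by
        gcongr
        · rw [inner_sub_right]; linarith
    _ = 2 * ε₀ * M + ε₁ := by ring

end InnerProductSpace

theorem approx_cost_approx_Fmeasure_general {d : ℕ}
    (E : Set (EuclideanSpace ℝ (Fin d)))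
    (F : EuclideanSpace ℝ (Fin d) → ℝ) (a : ℝ → EuclideanSpace ℝ (Fin d))
    (M : ℝ) (hM : IsGreatest ((fun e' => ‖e'‖) '' E) M)
    (ε₀ ε₁ : ℝ) (hε₀ : 0 ≤ ε₀) (hε₁ : 0 ≤ ε₁)
    (Φ : ℝ) (hΦ : 0 < Φ)
    (hkey : ∀ e ∈ E, ∀ e' ∈ E, F e' > F e → F e' - F e ≤ Φ * ⟪a (F e'), e - e'⟫)
    (estar : EuclideanSpace ℝ (Fin d)) (hestarE : estar ∈ E)
    (ahat : EuclideanSpace ℝ (Fin d)) (e : EuclideanSpace ℝ (Fin d)) (he : e ∈ E)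
    (h1 : ‖ahat - a (F estar)‖ ≤ ε₀)
    (h2 : ∀ e' ∈ E, ⟪ahat, e⟫ ≤ ⟪ahat, e'⟫ + ε₁) :
    F e ≥ F estar - Φ * (2 * ε₀ * M + ε₁) := by
  have hnorm : ∀ x ∈ E, ‖x‖ ≤ M := fun x hx => hM.2 ⟨x, hx, rfl⟩
  rcases le_or_gt (F estar) (F e) with h | h
  · have hM₀ : 0 ≤ M := (norm_nonneg e).trans (hnorm e he)
    have : 0 ≤ Φ * (2 * ε₀ * M + ε₁) := by positivity
    linarith
  · have hcost : ⟪a (F estar), e - estar⟫ ≤ 2 * ε₀ * M + ε₁ :=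
      real_inner_sub_le_of_approx_minimizer h1 (hnorm e he) (hnorm estar hestarE)
        (h2 estar hestarE)
    have hgap := hkey e he estar hestarE h
    linarith [mul_le_mul_of_nonneg_left hcost hΦ.le]

/-- Approximation guarantee: if costs `â` are `ε₀`-close to the optimal costs
`a (F e⋆)` and `e ∈ E` is an `ε₁`-approximate minimizer of the cost-sensitive
objective `⟪â, ·⟫` over `E`, then `F e ≥ F e⋆ − Φ (2 ε₀ M + ε₁)`, where `M` is the
maximum norm over `E` and `Φ` satisfies
`F e' − F e ≤ Φ ⟪a (F e'), e − e'⟫` whenever `F e' > F e`. -/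
theorem approx_cost_approx_Fmeasure {d : ℕ}
    (D E : Set (EuclideanSpace ℝ (Fin d))) (hED : E ⊆ D)
    (F : EuclideanSpace ℝ (Fin d) → ℝ) (a : ℝ → EuclideanSpace ℝ (Fin d))
    (hEne : E.Nonempty) (hEcomp : IsCompact E)
    (M : ℝ) (hM : IsGreatest ((fun e' => ‖e'‖) '' E) M)
    (ε₀ ε₁ : ℝ) (hε₀ : 0 ≤ ε₀) (hε₁ : 0 ≤ ε₁)
    (Φ : ℝ) (hΦ : 0 < Φ)
    (hkey : ∀ e ∈ E, ∀ e' ∈ E, F e' > F e → F e' - F e ≤ Φ * ⟪a (F e'), e - e'⟫)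
    (estar : EuclideanSpace ℝ (Fin d)) (hestarE : estar ∈ E)
    (hmax : ∀ e' ∈ E, F e' ≤ F estar)
    (ahat : EuclideanSpace ℝ (Fin d)) (e : EuclideanSpace ℝ (Fin d)) (he : e ∈ E)
    (h1 : ‖ahat - a (F estar)‖ ≤ ε₀)
    (h2 : ∀ e' ∈ E, ⟪ahat, e⟫ ≤ ⟪ahat, e'⟫ + ε₁) :
    F e ≥ F estar - Φ * (2 * ε₀ * M + ε₁) :=
  approx_cost_approx_Fmeasure_general E F a M hM ε₀ ε₁ hε₀ hε₁ Φ hΦ hkey estar hestarE ahat e he h1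
    h2
end

section
/- Let β > 0 and 0 < P₁ < 1, and let F_β(e) = (1+β²)(P₁ − e₁)/((1+β²)P₁ + e₂ − e₁) on D₀ = [0, P₁] × [0, 1 − P₁]. Then for all e, e' ∈ D₀ with F_β(e') > F_β(e), setting t' = F_β(e'), one has F_β(e') − F_β(e) ≤ (1/(β²P₁)) · [ (1+β² − t')(e₁ − e'₁) + t'(e₂ − e'₂) ]. -/
/-- The binary `F_β`-measure as a function of the false-negative probability `e₁`
and the false-positive probability `e₂`. -/
noncomputable def binaryFbeta (β P₁ e₁ e₂ : ℝ) : ℝ :=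
  (1 + β ^ 2) * (P₁ - e₁) / ((1 + β ^ 2) * P₁ + e₂ - e₁)

theorem binaryFbeta_denom_ge (β P₁ e₁ e₂ : ℝ) (he₁ : e₁ ≤ P₁) (he₂ : 0 ≤ e₂) :
    β ^ 2 * P₁ ≤ (1 + β ^ 2) * P₁ + e₂ - e₁ := by
  linarith

/-- Since `t' := F_β(e')` satisfies `t' · D(e') = N(e')` for the numerator `N` and denominator `D`,
the numerator `t' · D(e) - N(e)` of `F_β(e') - F_β(e)` is linear in `e - e'`. -/
theorem binaryFbeta_sub_eq (β P₁ e₁ e₂ e₁' e₂' : ℝ)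
    (hD : (1 + β ^ 2) * P₁ + e₂ - e₁ ≠ 0) (hD' : (1 + β ^ 2) * P₁ + e₂' - e₁' ≠ 0) :
    binaryFbeta β P₁ e₁' e₂' - binaryFbeta β P₁ e₁ e₂ =
      ((1 + β ^ 2 - binaryFbeta β P₁ e₁' e₂') * (e₁ - e₁') +
          binaryFbeta β P₁ e₁' e₂' * (e₂ - e₂')) / ((1 + β ^ 2) * P₁ + e₂ - e₁) := by
  unfold binaryFbeta
  field_simp
  ring

theorem binary_Fbeta_discretization_bound_general (β P₁ : ℝ) (hβ : 0 < β)
    (hP₁ : 0 < P₁) (e₁ e₂ e₁' e₂' : ℝ)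
    (he₁ : e₁ ∈ Set.Icc 0 P₁) (he₂ : e₂ ∈ Set.Icc 0 (1 - P₁))
    (he₁' : e₁' ∈ Set.Icc 0 P₁) (he₂' : e₂' ∈ Set.Icc 0 (1 - P₁))
    (hlt : binaryFbeta β P₁ e₁' e₂' > binaryFbeta β P₁ e₁ e₂) :
    binaryFbeta β P₁ e₁' e₂' - binaryFbeta β P₁ e₁ e₂ ≤
      (1 / (β ^ 2 * P₁)) *
        ((1 + β ^ 2 - binaryFbeta β P₁ e₁' e₂') * (e₁ - e₁') +
          binaryFbeta β P₁ e₁' e₂' * (e₂ - e₂')) := by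
  have hΦ : 0 < β ^ 2 * P₁ := by positivity
  have hD := binaryFbeta_denom_ge β P₁ e₁ e₂ he₁.2 he₂.1
  have hD' := binaryFbeta_denom_ge β P₁ e₁' e₂' he₁'.2 he₂'.1
  have hgap := sub_pos.2 hlt
  rw [binaryFbeta_sub_eq β P₁ e₁ e₂ e₁' e₂' (by linarith) (by linarith)] at hgap ⊢
  have hcost := (div_pos_iff_of_pos_right (hΦ.trans_le hD)).1 hgap
  rw [one_div_mul_eq_div]
  exact div_le_div_of_nonneg_left hcost.le hΦ hD

/-- Discretization-factor bound for the binary `F_β`-measure: for error profiles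
`e, e'` in `D₀ = [0,P₁] × [0,1−P₁]` with `F_β(e') > F_β(e)` and `t' = F_β(e')`,
`F_β(e') − F_β(e) ≤ (1/(β²P₁))·[(1+β²−t')(e₁−e'₁) + t'(e₂−e'₂)]`. -/
theorem binary_Fbeta_discretization_bound (β P₁ : ℝ) (hβ : 0 < β)
    (hP₁ : 0 < P₁) (hP₁' : P₁ < 1) (e₁ e₂ e₁' e₂' : ℝ)
    (he₁ : e₁ ∈ Set.Icc 0 P₁) (he₂ : e₂ ∈ Set.Icc 0 (1 - P₁))
    (he₁' : e₁' ∈ Set.Icc 0 P₁) (he₂' : e₂' ∈ Set.Icc 0 (1 - P₁))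
    (hlt : binaryFbeta β P₁ e₁' e₂' > binaryFbeta β P₁ e₁ e₂) :
    binaryFbeta β P₁ e₁' e₂' - binaryFbeta β P₁ e₁ e₂ ≤
      (1 / (β ^ 2 * P₁)) *
        ((1 + β ^ 2 - binaryFbeta β P₁ e₁' e₂') * (e₁ - e₁') +
          binaryFbeta β P₁ e₁' e₂' * (e₂ - e₂')) :=
  binary_Fbeta_discretization_bound_general β P₁ hβ hP₁ e₁ e₂ e₁' e₂' he₁ he₂ he₁' he₂' hlt
end

section
/- Let 0 < P₁ < 1 and let F₁(e) = 2(P₁ − e₁)/(2P₁ + e₂ − e₁) on D₀ = [0, P₁] × [0, 1 − P₁]. Let E ⊆ D₀ be a nonempty compact set and let F⋆ = max over e ∈ E of F₁(e). Then for every e⋆ ∈ E: F₁(e⋆) = F⋆ if and only if e⋆ minimizes the cost-sensitive objective e ↦ (1 − F⋆/2)·e₁ + (F⋆/2)·e₂ over E. -/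
/-- The binary `F₁`-measure of an error profile `e = (e₁, e₂)`. -/
noncomputable def binaryF1 (P₁ : ℝ) (e : ℝ × ℝ) : ℝ :=
  2 * (P₁ - e.1) / (2 * P₁ + e.2 - e.1)

/-!
Clearing the positive denominator `2P₁ + e₂ - e₁`, the inequality `F₁(e) ≤ F` becomes the linear
inequality `P₁ (1 - F) ≤ (1 - F/2) e₁ + (F/2) e₂`, with equality on one side exactly when there is
equality on the other. Hence `F⋆` is the maximum of `F₁` over `E` exactly when `P₁ (1 - F⋆)` is the
minimum over `E` of the cost-sensitive risk with weights `1 - F⋆/2` and `F⋆/2`, and the points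
attaining the one are the points attaining the other.
-/

/-- The expected cost with cost `1 - c` for false negatives and `c` for false positives. -/
def costSensitiveRisk (c : ℝ) (e : ℝ × ℝ) : ℝ :=
  (1 - c) * e.1 + c * e.2

theorem eq_iff_forall_le_of_isLeast_image {α β : Type*} [PartialOrder β] {f : α → β}
    {s : Set α} {m : β} (h : IsLeast (f '' s) m) {x : α} (hx : x ∈ s) :
    f x = m ↔ ∀ y ∈ s, f x ≤ f y := by
  constructor
  · rintro rfl y hy
    exact h.2 ⟨y, hy, rfl⟩
  · intro hmin
    obtain ⟨y, hy, rfl⟩ := h.1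
    exact le_antisymm (hmin y hy) (h.2 ⟨x, hx, rfl⟩)

section

variable {P₁ F : ℝ} {e : ℝ × ℝ}

theorem binaryF1_le_iff (hD : 0 < 2 * P₁ + e.2 - e.1) :
    binaryF1 P₁ e ≤ F ↔ P₁ * (1 - F) ≤ costSensitiveRisk (F / 2) e := by
  rw [binaryF1, div_le_iff₀ hD, costSensitiveRisk]
  constructor <;> intro h <;> linarith

theorem binaryF1_eq_iff (hD : 0 < 2 * P₁ + e.2 - e.1) :
    binaryF1 P₁ e = F ↔ costSensitiveRisk (F / 2) e = P₁ * (1 - F) := by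
  rw [binaryF1, div_eq_iff hD.ne', costSensitiveRisk]
  constructor <;> intro h <;> linarith

theorem binaryF1_isLeast_costSensitiveRisk_image {E : Set (ℝ × ℝ)}
    (hD : ∀ e ∈ E, 0 < 2 * P₁ + e.2 - e.1) (hF : IsGreatest (binaryF1 P₁ '' E) F) :
    IsLeast (costSensitiveRisk (F / 2) '' E) (P₁ * (1 - F)) := by
  obtain ⟨⟨e₀, he₀, hF₀⟩, hle⟩ := hF
  refine ⟨⟨e₀, he₀, (binaryF1_eq_iff (hD e₀ he₀)).1 hF₀⟩, ?_⟩
  rintro _ ⟨e, he, rfl⟩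
  exact (binaryF1_le_iff (hD e he)).1 (hle ⟨e, he, rfl⟩)

end

theorem binary_F1_optimal_iff_costSensitive_general (P₁ : ℝ) (hP₁ : 0 < P₁)
    (E : Set (ℝ × ℝ)) (hE : E ⊆ Set.Icc (0 : ℝ) P₁ ×ˢ Set.Icc (0 : ℝ) (1 - P₁))
    (Fstar : ℝ) (hFstar : IsGreatest (binaryF1 P₁ '' E) Fstar) :
    ∀ estar ∈ E,
      (binaryF1 P₁ estar = Fstar ↔
        ∀ e' ∈ E,
          (1 - Fstar / 2) * estar.1 + (Fstar / 2) * estar.2 ≤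
            (1 - Fstar / 2) * e'.1 + (Fstar / 2) * e'.2) := by
  intro estar hestar
  have hD : ∀ e ∈ E, 0 < 2 * P₁ + e.2 - e.1 := fun e he => by
    linarith [(hE he).1.2, (hE he).2.1]
  rw [binaryF1_eq_iff (hD estar hestar)]
  exact eq_iff_forall_le_of_isLeast_image
    (binaryF1_isLeast_costSensitiveRisk_image hD hFstar) hestar

/-- For the binary `F₁`-measure, a point `e⋆` of a nonempty compact set
`E ⊆ [0,P₁] × [0,1−P₁]` achieves the maximum `F⋆` of `F₁` over `E` if and only if it
minimizes the cost-sensitive objective `e ↦ (1 − F⋆/2)·e₁ + (F⋆/2)·e₂` over `E`. -/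
theorem binary_F1_optimal_iff_costSensitive (P₁ : ℝ) (hP₁ : 0 < P₁) (hP₁' : P₁ < 1)
    (E : Set (ℝ × ℝ)) (hE : E ⊆ Set.Icc (0 : ℝ) P₁ ×ˢ Set.Icc (0 : ℝ) (1 - P₁))
    (hEne : E.Nonempty) (hEcomp : IsCompact E)
    (Fstar : ℝ) (hFstar : IsGreatest (binaryF1 P₁ '' E) Fstar) :
    ∀ estar ∈ E,
      (binaryF1 P₁ estar = Fstar ↔
        ∀ e' ∈ E,
          (1 - Fstar / 2) * estar.1 + (Fstar / 2) * estar.2 ≤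
            (1 - Fstar / 2) * e'.1 + (Fstar / 2) * e'.2) :=
  binary_F1_optimal_iff_costSensitive_general P₁ hP₁ E hE Fstar hFstar
end

section
/- Let β > 0, L ≥ 1, and P₁, …, P_L > 0. Let mF_β(fn, fp) = (1+β²)·Σ_k (P_k − fn_k) / ( (1+β²)·Σ_k P_k + Σ_k (fp_k − fn_k) ) on the domain of (fn, fp) ∈ ℝ^L × ℝ^L with 0 ≤ fn_k ≤ P_k and fp_k ≥ 0 for all k. Then for all (fn, fp) and (fn', fp') in this domain with mF_β(fn', fp') > mF_β(fn, fp), setting t' = mF_β(fn', fp'), one has mF_β(fn', fp') − mF_β(fn, fp) ≤ (1/(β²·Σ_k P_k)) · [ (1+β² − t')·Σ_k (fn_k − fn'_k) + t'·Σ_k (fp_k − fp'_k) ]. -/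
/-- The multilabel micro-`F_β`-measure with marginal label probabilities `P`,
false-negative probabilities `fn` and false-positive probabilities `fp`,
for labels `k ∈ {1, …, L}`. -/
noncomputable def multilabelMicroFbeta (β : ℝ) (L : ℕ) (P fn fp : ℕ → ℝ) : ℝ :=
  (1 + β ^ 2) * (∑ k ∈ Finset.Icc 1 L, (P k - fn k)) /
    ((1 + β ^ 2) * (∑ k ∈ Finset.Icc 1 L, P k) + ∑ k ∈ Finset.Icc 1 L, (fp k - fn k))

/-!
The micro-`F_β`-measure depends on the error profile only through the totals
`A = Σₖ fnₖ` and `B = Σₖ fpₖ`, as `F(A, B) = c (S - A) / (c S + B - A)` with `c = 1 + β²`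
and `S = Σₖ Pₖ`. Clearing denominators gives the exact identity
`F(A', B') - F(A, B) = ((c - F(A', B')) (A - A') + F(A', B') (B - B')) / (c S + B - A)`,
so the numerator is positive when `F(A', B') > F(A, B)`, and on the domain the denominator
is at least `β² S`.
-/

variable {K : Type*} [Field K] [LinearOrder K] [IsStrictOrderedRing K]

def microFbetaOfTotals (β S A B : K) : K :=
  (1 + β ^ 2) * (S - A) / ((1 + β ^ 2) * S + (B - A))

theorem multilabelMicroFbeta_eq_microFbetaOfTotals (β : ℝ) (L : ℕ) (P fn fp : ℕ → ℝ) :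
    multilabelMicroFbeta β L P fn fp =
      microFbetaOfTotals β (∑ k ∈ Finset.Icc 1 L, P k) (∑ k ∈ Finset.Icc 1 L, fn k)
        (∑ k ∈ Finset.Icc 1 L, fp k) := by
  simp only [multilabelMicroFbeta, microFbetaOfTotals, Finset.sum_sub_distrib]

theorem microFbetaOfTotals_sub {β S A B A' B' : K}
    (hD : (1 + β ^ 2) * S + (B - A) ≠ 0) (hD' : (1 + β ^ 2) * S + (B' - A') ≠ 0) :
    microFbetaOfTotals β S A' B' - microFbetaOfTotals β S A B =
      ((1 + β ^ 2 - microFbetaOfTotals β S A' B') * (A - A') +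
          microFbetaOfTotals β S A' B' * (B - B')) / ((1 + β ^ 2) * S + (B - A)) := by
  have hF := div_mul_cancel₀ ((1 + β ^ 2) * (S - A)) hD
  have hF' := div_mul_cancel₀ ((1 + β ^ 2) * (S - A')) hD'
  simp only [microFbetaOfTotals] at hF hF' ⊢
  rw [eq_div_iff hD]
  linear_combination hF' - hF

theorem microFbetaOfTotals_sub_le {β S A B A' B' : K} (hβ : 0 < β) (hS : 0 < S)
    (hA : A ≤ S) (hB : 0 ≤ B) (hA' : A' ≤ S) (hB' : 0 ≤ B')
    (hlt : microFbetaOfTotals β S A B < microFbetaOfTotals β S A' B') :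
    microFbetaOfTotals β S A' B' - microFbetaOfTotals β S A B ≤
      1 / (β ^ 2 * S) *
        ((1 + β ^ 2 - microFbetaOfTotals β S A' B') * (A - A') +
          microFbetaOfTotals β S A' B' * (B - B')) := by
  have hβS : 0 < β ^ 2 * S := by positivity
  have hD : β ^ 2 * S ≤ (1 + β ^ 2) * S + (B - A) := by linarith
  have hD' : β ^ 2 * S ≤ (1 + β ^ 2) * S + (B' - A') := by linarith
  have hgap := sub_pos.mpr hlt
  rw [microFbetaOfTotals_sub (by linarith) (by linarith)] at hgap ⊢
  have hnum := (div_pos_iff_of_pos_right (hβS.trans_le hD)).mp hgap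
  rw [one_div_mul_eq_div]
  exact div_le_div_of_nonneg_left hnum.le hβS hD

/-- Discretization-factor bound for the multilabel micro-`F_β`-measure: for error
profiles `(fn, fp)` and `(fn', fp')` in the domain with `mF_β(fn',fp') > mF_β(fn,fp)`
and `t' = mF_β(fn',fp')`, the difference is at most
`(1/(β²ΣₖPₖ))·[(1+β²−t')Σₖ(fnₖ−fn'ₖ) + t'Σₖ(fpₖ−fp'ₖ)]`. -/
theorem multilabel_micro_Fbeta_discretization_bound (β : ℝ) (hβ : 0 < β)
    (L : ℕ) (hL : 1 ≤ L) (P : ℕ → ℝ) (hP : ∀ k ∈ Finset.Icc 1 L, 0 < P k)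
    (fn fp fn' fp' : ℕ → ℝ)
    (hfn : ∀ k ∈ Finset.Icc 1 L, 0 ≤ fn k ∧ fn k ≤ P k)
    (hfp : ∀ k ∈ Finset.Icc 1 L, 0 ≤ fp k)
    (hfn' : ∀ k ∈ Finset.Icc 1 L, 0 ≤ fn' k ∧ fn' k ≤ P k)
    (hfp' : ∀ k ∈ Finset.Icc 1 L, 0 ≤ fp' k)
    (hlt : multilabelMicroFbeta β L P fn' fp' > multilabelMicroFbeta β L P fn fp) :
    multilabelMicroFbeta β L P fn' fp' - multilabelMicroFbeta β L P fn fp ≤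
      (1 / (β ^ 2 * ∑ k ∈ Finset.Icc 1 L, P k)) *
        ((1 + β ^ 2 - multilabelMicroFbeta β L P fn' fp') *
            (∑ k ∈ Finset.Icc 1 L, (fn k - fn' k)) +
          multilabelMicroFbeta β L P fn' fp' *
            (∑ k ∈ Finset.Icc 1 L, (fp k - fp' k))) := by
  have hS : 0 < ∑ k ∈ Finset.Icc 1 L, P k :=
    Finset.sum_pos hP ⟨1, Finset.mem_Icc.mpr ⟨le_rfl, hL⟩⟩
  rw [Finset.sum_sub_distrib, Finset.sum_sub_distrib]
  rw [multilabelMicroFbeta_eq_microFbetaOfTotals, multilabelMicroFbeta_eq_microFbetaOfTotals]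
    at hlt ⊢
  exact microFbetaOfTotals_sub_le hβ hS
    (Finset.sum_le_sum fun k hk => (hfn k hk).2) (Finset.sum_nonneg hfp)
    (Finset.sum_le_sum fun k hk => (hfn' k hk).2) (Finset.sum_nonneg hfp') hlt
end

section
/- Let β > 0, L ≥ 2, and 0 < P₁ < 1. Let mcF_β(fn) = (1+β²)·(1 − P₁ − Σ_{k=2}^L fn_k) / ( (1+β²)(1 − P₁) − Σ_{k=2}^L fn_k + fn₁ ) on the domain of fn ∈ ℝ^L with fn_k ≥ 0 for all k, Σ_{k=2}^L fn_k ≤ 1 − P₁, and fn₁ ≤ P₁. Then for all fn, fn' in this domain with mcF_β(fn') > mcF_β(fn), setting t' = mcF_β(fn'), one has mcF_β(fn') − mcF_β(fn) ≤ (1/(β²(1 − P₁))) · [ (1+β² − t')·Σ_{k=2}^L (fn_k − fn'_k) + t'·(fn₁ − fn'₁) ]. -/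
/-!
Both `F`-values are quotients `c (A - S) / (c A - S + f)` with `c = 1 + β²`, `A = 1 - P₁`,
`S = Σ_{k ≥ 2} fn_k` and `f = fn₁`. Clearing the old denominator gives the exact identity
`t' - t = [(c - t') (S - S') + t' (f - f')] / (c A - S + f)`, and on the domain this denominator
is at least `β² A > 0`. When `t' > t` the numerator is nonnegative, so replacing the
denominator by `β² A` can only increase the quotient.
-/

/-- The multiclass micro-`F_β`-measure with default-class probability `P₁` and
per-class false-negative probabilities `fn`, for classes `k ∈ {1, …, L}` where class 1
is the default class. -/
noncomputable def multiclassMicroFbeta (β : ℝ) (L : ℕ) (P₁ : ℝ) (fn : ℕ → ℝ) : ℝ :=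
  (1 + β ^ 2) * (1 - P₁ - ∑ k ∈ Finset.Icc 2 L, fn k) /
    ((1 + β ^ 2) * (1 - P₁) - (∑ k ∈ Finset.Icc 2 L, fn k) + fn 1)

section FbetaRatio

variable {K : Type*} [Field K]

def fbetaRatio (c A S f : K) : K := c * (A - S) / (c * A - S + f)

theorem fbetaRatio_sub_eq_div {c A S S' f f' : K} (hD : c * A - S + f ≠ 0)
    (hD' : c * A - S' + f' ≠ 0) :
    fbetaRatio c A S' f' - fbetaRatio c A S f =
      ((c - fbetaRatio c A S' f') * (S - S') + fbetaRatio c A S' f' * (f - f')) /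
        (c * A - S + f) := by
  unfold fbetaRatio
  field_simp
  ring

end FbetaRatio

theorem multiclassMicroFbeta_eq_fbetaRatio (β : ℝ) (L : ℕ) (P₁ : ℝ) (fn : ℕ → ℝ) :
    multiclassMicroFbeta β L P₁ fn =
      fbetaRatio (1 + β ^ 2) (1 - P₁) (∑ k ∈ Finset.Icc 2 L, fn k) (fn 1) :=
  rfl

theorem multiclassMicroFbeta_sub_eq_div {β P₁ : ℝ} {L : ℕ} {fn fn' : ℕ → ℝ}
    (hD : (1 + β ^ 2) * (1 - P₁) - ∑ k ∈ Finset.Icc 2 L, fn k + fn 1 ≠ 0)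
    (hD' : (1 + β ^ 2) * (1 - P₁) - ∑ k ∈ Finset.Icc 2 L, fn' k + fn' 1 ≠ 0) :
    multiclassMicroFbeta β L P₁ fn' - multiclassMicroFbeta β L P₁ fn =
      ((1 + β ^ 2 - multiclassMicroFbeta β L P₁ fn') * ∑ k ∈ Finset.Icc 2 L, (fn k - fn' k) +
          multiclassMicroFbeta β L P₁ fn' * (fn 1 - fn' 1)) /
        ((1 + β ^ 2) * (1 - P₁) - ∑ k ∈ Finset.Icc 2 L, fn k + fn 1) := by
  simp only [multiclassMicroFbeta_eq_fbetaRatio, Finset.sum_sub_distrib]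
  exact fbetaRatio_sub_eq_div hD hD'

theorem div_le_div_of_div_pos_of_le {K : Type*} [Field K] [LinearOrder K] [IsStrictOrderedRing K]
    {n d c : K} (hpos : 0 < n / d) (hd : 0 < d) (hc : 0 < c) (hcd : c ≤ d) : n / d ≤ n / c :=
  div_le_div_of_nonneg_left ((div_pos_iff_of_pos_right hd).mp hpos).le hc hcd

theorem multiclass_micro_Fbeta_discretization_bound_general (β : ℝ) (hβ : 0 < β)
    (L : ℕ) (hL : 2 ≤ L) (P₁ : ℝ) (hP₁' : P₁ < 1)
    (fn fn' : ℕ → ℝ)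
    (hfn : ∀ k ∈ Finset.Icc 1 L, 0 ≤ fn k)
    (hsum : ∑ k ∈ Finset.Icc 2 L, fn k ≤ 1 - P₁)
    (hfn' : ∀ k ∈ Finset.Icc 1 L, 0 ≤ fn' k)
    (hsum' : ∑ k ∈ Finset.Icc 2 L, fn' k ≤ 1 - P₁)
    (hlt : multiclassMicroFbeta β L P₁ fn' > multiclassMicroFbeta β L P₁ fn) :
    multiclassMicroFbeta β L P₁ fn' - multiclassMicroFbeta β L P₁ fn ≤
      (1 / (β ^ 2 * (1 - P₁))) *
        ((1 + β ^ 2 - multiclassMicroFbeta β L P₁ fn') *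
            (∑ k ∈ Finset.Icc 2 L, (fn k - fn' k)) +
          multiclassMicroFbeta β L P₁ fn' * (fn 1 - fn' 1)) := by
  have h1 : 1 ∈ Finset.Icc 1 L := Finset.mem_Icc.mpr ⟨le_rfl, by omega⟩
  have hΦ : 0 < β ^ 2 * (1 - P₁) := mul_pos (by positivity) (by linarith)
  have hD : β ^ 2 * (1 - P₁) ≤ (1 + β ^ 2) * (1 - P₁) - ∑ k ∈ Finset.Icc 2 L, fn k + fn 1 := by
    linarith [hfn 1 h1]
  have hD' : β ^ 2 * (1 - P₁) ≤ (1 + β ^ 2) * (1 - P₁) - ∑ k ∈ Finset.Icc 2 L, fn' k + fn' 1 := by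
    linarith [hfn' 1 h1]
  have hdiff := multiclassMicroFbeta_sub_eq_div (hΦ.trans_le hD).ne' (hΦ.trans_le hD').ne'
  rw [one_div_mul_eq_div, hdiff]
  exact div_le_div_of_div_pos_of_le (hdiff ▸ sub_pos.mpr hlt) (hΦ.trans_le hD) hΦ hD

/-- Discretization-factor bound for the multiclass micro-`F_β`-measure: for error
profiles `fn`, `fn'` in the domain with `mcF_β(fn') > mcF_β(fn)` and
`t' = mcF_β(fn')`, the difference is at most
`(1/(β²(1−P₁)))·[(1+β²−t')Σ_{k=2}^L(fnₖ−fn'ₖ) + t'(fn₁−fn'₁)]`. -/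
theorem multiclass_micro_Fbeta_discretization_bound (β : ℝ) (hβ : 0 < β)
    (L : ℕ) (hL : 2 ≤ L) (P₁ : ℝ) (hP₁ : 0 < P₁) (hP₁' : P₁ < 1)
    (fn fn' : ℕ → ℝ)
    (hfn : ∀ k ∈ Finset.Icc 1 L, 0 ≤ fn k)
    (hsum : ∑ k ∈ Finset.Icc 2 L, fn k ≤ 1 - P₁) (hfn1 : fn 1 ≤ P₁)
    (hfn' : ∀ k ∈ Finset.Icc 1 L, 0 ≤ fn' k)
    (hsum' : ∑ k ∈ Finset.Icc 2 L, fn' k ≤ 1 - P₁) (hfn1' : fn' 1 ≤ P₁)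
    (hlt : multiclassMicroFbeta β L P₁ fn' > multiclassMicroFbeta β L P₁ fn) :
    multiclassMicroFbeta β L P₁ fn' - multiclassMicroFbeta β L P₁ fn ≤
      (1 / (β ^ 2 * (1 - P₁))) *
        ((1 + β ^ 2 - multiclassMicroFbeta β L P₁ fn') *
            (∑ k ∈ Finset.Icc 2 L, (fn k - fn' k)) +
          multiclassMicroFbeta β L P₁ fn' * (fn 1 - fn' 1)) :=
  multiclass_micro_Fbeta_discretization_bound_general β hβ L hL P₁ hP₁' fn fn' hfn hsum hfn' hsum'
    hlt
end

section
/- Let β > 0 and 0 < P₁ < 1. The binary F_β-measure F_β(e) = (1+β²)(P₁ − e₁)/((1+β²)P₁ + e₂ − e₁), viewed as a function of e = (e₁, e₂) ∈ ℝ², is pseudo-linear on the open convex half-plane {e ∈ ℝ² : (1+β²)P₁ − e₁ + e₂ > 0}. -/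
open RealInnerProductSpace

/-!
`F_β` is a ratio `N / D` of affine functions. For such a ratio the directional derivative at `e`
towards `e'` is `⟪∇F e, e' - e⟫ = (D e' / D e) * (F e' - F e)`, so on the half-plane `D > 0` it has
the sign of `F e' - F e`; this gives pseudo-convexity of `F` and of `-F` at once.
-/

section

variable {E : Type*} [NormedAddCommGroup E] [InnerProductSpace ℝ E] [CompleteSpace E]

lemma gradient_fun_neg (F : E → ℝ) (e : E) : gradient (fun x => -F x) e = -gradient F e := by
  rw [gradient, gradient, fderiv_fun_neg, map_neg]

lemma pseudoLinearOn_of_inner_gradient_eq_mul {D : Set E} {F : E → ℝ}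
    (h : ∀ e ∈ D, ∀ e' ∈ D, ∃ c > 0, ⟪gradient F e, e' - e⟫ = c * (F e' - F e)) :
    PseudoLinearOn D F := by
  constructor
  · intro e he e' he' hlt
    obtain ⟨c, hc, hce⟩ := h e he e' he'
    rw [hce]
    exact mul_neg_of_pos_of_neg hc (by linarith)
  · intro e he e' he' hlt
    obtain ⟨c, hc, hce⟩ := h e he e' he'
    rw [gradient_fun_neg, inner_neg_left, hce, neg_neg_iff_pos]
    exact mul_pos hc (by linarith)

lemma inner_gradient_div_affine (N D : E →ᴬ[ℝ] ℝ) {e : E} (he : D e ≠ 0) (e' : E) :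
    ⟪gradient (fun x => N x / D x) e, e' - e⟫ = (N e' * D e - N e * D e') / D e ^ 2 := by
  have hderiv := N.hasFDerivAt.mul ((hasDerivAt_inv he).comp_hasFDerivAt e D.hasFDerivAt)
  have hquot : (fun x => N x / D x) = N * (·⁻¹) ∘ D := funext fun _ => div_eq_mul_inv _ _
  rw [gradient, InnerProductSpace.toDual_symm_apply, hquot, hderiv.fderiv]
  simp only [add_apply, smul_apply, smul_eq_mul, Function.comp_apply]
  rw [← vsub_eq_sub e' e, D.contLinear_map_vsub, N.contLinear_map_vsub, vsub_eq_sub, vsub_eq_sub]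
  field_simp
  ring

theorem pseudoLinearOn_div_affine (N D : E →ᴬ[ℝ] ℝ) :
    PseudoLinearOn {x | 0 < D x} (fun x => N x / D x) := by
  refine pseudoLinearOn_of_inner_gradient_eq_mul fun e (he : 0 < D e) e' (he' : 0 < D e') =>
    ⟨D e' / D e, div_pos he' he, ?_⟩
  rw [inner_gradient_div_affine N D he.ne']
  field_simp

end

theorem binary_Fbeta_pseudoLinear_general (β P₁ : ℝ) :
    PseudoLinearOn
      {e : EuclideanSpace ℝ (Fin 2) | (1 + β ^ 2) * P₁ - e 0 + e 1 > 0}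
      (fun e => (1 + β ^ 2) * (P₁ - e 0) / ((1 + β ^ 2) * P₁ + e 1 - e 0)) := by
  let x₀ : EuclideanSpace ℝ (Fin 2) →L[ℝ] ℝ := EuclideanSpace.proj 0
  let x₁ : EuclideanSpace ℝ (Fin 2) →L[ℝ] ℝ := EuclideanSpace.proj 1
  let c : EuclideanSpace ℝ (Fin 2) →ᴬ[ℝ] ℝ := .const ℝ _ ((1 + β ^ 2) * P₁)
  let N := (-(1 + β ^ 2)) • x₀.toContinuousAffineMap + c
  let D := (x₁ - x₀).toContinuousAffineMap + c
  convert pseudoLinearOn_div_affine N D using 1 <;> ext e <;> simp [N, D, c, x₀, x₁] <;> ring_nf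

/-- The binary `F_β`-measure `F_β(e) = (1+β²)(P₁ − e₁)/((1+β²)P₁ + e₂ − e₁)` is
pseudo-linear on the open half-plane where its denominator is positive. -/
theorem binary_Fbeta_pseudoLinear (β P₁ : ℝ) (hβ : 0 < β)
    (hP₁ : 0 < P₁) (hP₁' : P₁ < 1) :
    PseudoLinearOn
      {e : EuclideanSpace ℝ (Fin 2) | (1 + β ^ 2) * P₁ - e 0 + e 1 > 0}
      (fun e => (1 + β ^ 2) * (P₁ - e 0) / ((1 + β ^ 2) * P₁ + e 1 - e 0)) :=
  binary_Fbeta_pseudoLinear_general β P₁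
end

section
/- Let β > 0, L ≥ 2, and 0 < P₁ < 1. The multiclass micro-F_β-measure mcF_β(fn) = (1+β²)·(1 − P₁ − Σ_{k=2}^L fn_k) / ( (1+β²)(1 − P₁) − Σ_{k=2}^L fn_k + fn₁ ), viewed as a function of fn ∈ ℝ^L, is pseudo-linear on the open convex half-space {fn ∈ ℝ^L : (1+β²)(1 − P₁) − Σ_{k=2}^L fn_k + fn₁ > 0}. -/
open RealInnerProductSpace

lemma aux_inner_gradient_s16 {E : Type*} [NormedAddCommGroup E] [InnerProductSpace ℝ E]
    [CompleteSpace E] {F : E → ℝ} {Φ : E →L[ℝ] ℝ} {x v : E}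
    (h : HasFDerivAt F Φ x) : ⟪gradient F x, v⟫ = Φ v := by
  rw [gradient, h.fderiv]
  exact InnerProductSpace.toDual_symm_apply

lemma aux_pseudoConvex {E : Type*} [NormedAddCommGroup E] [InnerProductSpace ℝ E]
    [CompleteSpace E] (a b : ℝ) (ℓN ℓD : E →L[ℝ] ℝ) :
    (∀ e ∈ {x : E | 0 < b + ℓD x}, ∀ e' ∈ {x : E | 0 < b + ℓD x},
      ((fun x => (a + ℓN x) / (b + ℓD x)) e > (fun x => (a + ℓN x) / (b + ℓD x)) e' →
        ⟪gradient (fun x => (a + ℓN x) / (b + ℓD x)) e, e' - e⟫ < 0)) := by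
  intro e he e' he' hgt
  simp only [Set.mem_setOf_eq] at he he'
  have hz : b + ℓD e ≠ 0 := ne_of_gt he
  have hN : HasFDerivAt (fun x : E => a + ℓN x) ℓN e := by
    exact ℓN.hasFDerivAt.const_add a
  have hD : HasFDerivAt (fun x : E => b + ℓD x) ℓD e := by
    exact ℓD.hasFDerivAt.const_add b
  have hInv : HasFDerivAt (fun x : E => (b + ℓD x)⁻¹)
      ((-ContinuousLinearMap.mulLeftRight ℝ ℝ (b + ℓD e)⁻¹ (b + ℓD e)⁻¹).comp ℓD) e :=
    (hasFDerivAt_inv' hz).comp e hD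
  have hF : HasFDerivAt (fun x : E => (a + ℓN x) / (b + ℓD x))
      ((a + ℓN e) • ((-ContinuousLinearMap.mulLeftRight ℝ ℝ (b + ℓD e)⁻¹ (b + ℓD e)⁻¹).comp ℓD)
        + (b + ℓD e)⁻¹ • ℓN) e := by
    simp only [div_eq_mul_inv]
    exact hN.mul hInv
  rw [aux_inner_gradient_s16 hF]
  simp only [ContinuousLinearMap.add_apply, ContinuousLinearMap.smul_apply,
    ContinuousLinearMap.comp_apply, ContinuousLinearMap.neg_apply,
    ContinuousLinearMap.mulLeftRight_apply, smul_eq_mul, map_sub]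
  simp only [gt_iff_lt, div_lt_div_iff₀ he' he] at hgt
  have key : (a + ℓN e) * -((b + ℓD e)⁻¹ * ℓD e' * (b + ℓD e)⁻¹) + (b + ℓD e)⁻¹ * ℓN e' -
      ((a + ℓN e) * -((b + ℓD e)⁻¹ * ℓD e * (b + ℓD e)⁻¹) + (b + ℓD e)⁻¹ * ℓN e)
      = ((b + ℓD e) * (a + ℓN e') - (a + ℓN e) * (b + ℓD e')) / (b + ℓD e) ^ 2 := by
    field_simp
    ring
  rw [key]
  apply div_neg_of_neg_of_pos _ (by positivity)
  nlinarith [hgt]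

/-- The multiclass micro-`F_β`-measure, viewed as a function of `fn ∈ ℝ^L`
(class 1, the default class, is the index `0 : Fin L`, and `Σ_{k=2}^L fnₖ` is the sum
over the remaining indices), is pseudo-linear on the open half-space where its
denominator is positive. -/
theorem multiclass_micro_Fbeta_pseudoLinear (β : ℝ) (hβ : 0 < β)
    (L : ℕ) (hL : 2 ≤ L) (P₁ : ℝ) (hP₁ : 0 < P₁) (hP₁' : P₁ < 1) :
    PseudoLinearOn
      {fn : EuclideanSpace ℝ (Fin L) |
        (1 + β ^ 2) * (1 - P₁) -
          (∑ k ∈ Finset.univ.erase (⟨0, by omega⟩ : Fin L), fn k) +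
          fn ⟨0, by omega⟩ > 0}
      (fun fn =>
        (1 + β ^ 2) *
            (1 - P₁ - ∑ k ∈ Finset.univ.erase (⟨0, by omega⟩ : Fin L), fn k) /
          ((1 + β ^ 2) * (1 - P₁) -
            (∑ k ∈ Finset.univ.erase (⟨0, by omega⟩ : Fin L), fn k) +
            fn ⟨0, by omega⟩)) := by
  have h0 : 0 < L := by omega
  set i0 : Fin L := ⟨0, by omega⟩ with hi0
  set ℓS : EuclideanSpace ℝ (Fin L) →L[ℝ] ℝ :=
    ∑ k ∈ Finset.univ.erase i0, EuclideanSpace.proj k with hℓS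
  have hS : ∀ fn : EuclideanSpace ℝ (Fin L),
      ℓS fn = ∑ k ∈ Finset.univ.erase i0, fn k := by
    intro fn
    simp [hℓS, ContinuousLinearMap.sum_apply]
  set ℓD : EuclideanSpace ℝ (Fin L) →L[ℝ] ℝ := EuclideanSpace.proj i0 - ℓS with hℓD
  set ℓN : EuclideanSpace ℝ (Fin L) →L[ℝ] ℝ := (-(1 + β ^ 2)) • ℓS with hℓN
  set a : ℝ := (1 + β ^ 2) * (1 - P₁) with ha
  have hDval : ∀ fn : EuclideanSpace ℝ (Fin L), ℓD fn = fn i0 - ℓS fn := by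
    intro fn; simp [hℓD]
  have hNval : ∀ fn : EuclideanSpace ℝ (Fin L), ℓN fn = -(1 + β ^ 2) * ℓS fn := by
    intro fn; simp [hℓN]
  have hset : {fn : EuclideanSpace ℝ (Fin L) |
        (1 + β ^ 2) * (1 - P₁) -
          (∑ k ∈ Finset.univ.erase (⟨0, by omega⟩ : Fin L), fn k) +
          fn ⟨0, by omega⟩ > 0} = {x : EuclideanSpace ℝ (Fin L) | 0 < a + ℓD x} := by
    ext fn
    simp only [Set.mem_setOf_eq, hDval, hS, ha, gt_iff_lt]
    constructor <;> intro h <;> linarith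
  have hfun : (fun fn : EuclideanSpace ℝ (Fin L) =>
        (1 + β ^ 2) *
            (1 - P₁ - ∑ k ∈ Finset.univ.erase (⟨0, by omega⟩ : Fin L), fn k) /
          ((1 + β ^ 2) * (1 - P₁) -
            (∑ k ∈ Finset.univ.erase (⟨0, by omega⟩ : Fin L), fn k) +
            fn ⟨0, by omega⟩))
      = fun x => (a + ℓN x) / (a + ℓD x) := by
    funext fn
    rw [hNval, hDval, hS, ha]
    congr 1 <;> ring
  rw [hset, hfun]
  constructor
  · exact aux_pseudoConvex a a ℓN ℓD
  · have hfun2 : (fun e : EuclideanSpace ℝ (Fin L) => -((a + ℓN e) / (a + ℓD e)))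
        = fun x => ((-a) + (-ℓN) x) / (a + ℓD x) := by
      funext fn
      rw [← neg_div]
      congr 1
      simp
      ring
    exact hfun2 ▸ aux_pseudoConvex (-a) a (-ℓN) ℓD
end
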